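/- Let q : ℝ×ℝ → ℂ be twice continuously differentiable. Then the zero-curvature equation ∂ₜP(x,t,k) − ∂ₓR(x,t,k) + P(x,t,k)·R(x,t,k) − R(x,t,k)·P(x,t,k) = 0 holds for all (x,t) ∈ ℝ² and all k ∈ ℂ if and only if q satisfies the Gerdjikov–Ivanov equation on ℝ²; that is, the GI equation admits the Lax representation ψₓ = P ψ, ψₜ = R ψ. -/

import Mathlib

/-!
Both `P` and `R` are traceless, `!![a, b; c, -a]`, and so are their partial derivatives and
their commutator. Expanding the zero-curvature expression entrywise (using only `i² = -1` beyond
ring identities) identifies it with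
`!![(q̄ E - q Ē) / 2, -i k E; -i k Ē, -(q̄ E - q Ē) / 2]`,
where `E` is the left-hand side of the GI equation. Its `(0,1)` entry at `k = 1` gives `E = 0`;
conversely `E = 0` makes every entry vanish.
-/

open Matrix Complex ComplexConjugate

noncomputable section

abbrev M2 := Matrix (Fin 2) (Fin 2) ℂ

def sigma3 : M2 := !![1, 0; 0, -1]

/-- Partial derivative in the first (space) variable. -/
def pdx (f : ℝ × ℝ → ℂ) (p : ℝ × ℝ) : ℂ := deriv (fun x => f (x, p.2)) p.1

/-- Partial derivative in the second (time) variable. -/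
def pdt (f : ℝ × ℝ → ℂ) (p : ℝ × ℝ) : ℂ := deriv (fun t => f (p.1, t)) p.2

/-- Entrywise partial derivative in x of a matrix-valued function. -/
def mpdx (F : ℝ × ℝ → M2) (p : ℝ × ℝ) : M2 := Matrix.of fun i j => pdx (fun r => F r i j) p

/-- Entrywise partial derivative in t of a matrix-valued function. -/
def mpdt (F : ℝ × ℝ → M2) (p : ℝ × ℝ) : M2 := Matrix.of fun i j => pdt (fun r => F r i j) p

def Qm (q : ℝ × ℝ → ℂ) (p : ℝ × ℝ) : M2 := !![0, q p; -conj (q p), 0]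

def Um (q : ℝ × ℝ → ℂ) (p : ℝ × ℝ) (k : ℂ) : M2 :=
  k • Qm q p - (Complex.I / 2) • (Qm q p ^ 2 * sigma3)

def Vm (q : ℝ × ℝ → ℂ) (p : ℝ × ℝ) (k : ℂ) : M2 :=
  (2 * k ^ 3) • Qm q p - (Complex.I * k ^ 2) • (Qm q p ^ 2 * sigma3)
    - (Complex.I * k) • (mpdx (Qm q) p * sigma3)
    + (1 / 2 : ℂ) • (mpdx (Qm q) p * Qm q p - Qm q p * mpdx (Qm q) p)
    + (Complex.I / 4) • (Qm q p ^ 4 * sigma3)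

def Pm (q : ℝ × ℝ → ℂ) (p : ℝ × ℝ) (k : ℂ) : M2 :=
  (-Complex.I * k ^ 2) • sigma3 + Um q p k

def Rm (q : ℝ × ℝ → ℂ) (p : ℝ × ℝ) (k : ℂ) : M2 :=
  (-(2 * Complex.I) * k ^ 4) • sigma3 + Vm q p k

/-- The Gerdjikov–Ivanov equation. -/
def GI (q : ℝ × ℝ → ℂ) : Prop :=
  ∀ p : ℝ × ℝ,
    Complex.I * pdt q p + pdx (pdx q) p
      - Complex.I * (q p) ^ 2 * pdx (fun r => conj (q r)) p
      + (1 / 2 : ℂ) * (q p) ^ 3 * (conj (q p)) ^ 2 = 0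

def traceless (a b c : ℂ) : M2 := !![a, b; c, -a]

section Traceless

variable (a b c a' b' c' : ℂ)

lemma traceless_add :
    traceless a b c + traceless a' b' c' = traceless (a + a') (b + b') (c + c') := by
  ext i j; fin_cases i <;> fin_cases j <;> simp [traceless]; ring

lemma traceless_sub :
    traceless a b c - traceless a' b' c' = traceless (a - a') (b - b') (c - c') := by
  ext i j; fin_cases i <;> fin_cases j <;> simp [traceless]; ring

lemma traceless_mul_sub_mul :
    traceless a b c * traceless a' b' c' - traceless a' b' c' * traceless a b c
      = traceless (b * c' - c * b') (2 * (a * b' - b * a')) (2 * (c * a' - a * c')) := by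
  ext i j; fin_cases i <;> fin_cases j <;> simp [traceless] <;> ring

lemma traceless_eq_zero_iff : traceless a b c = 0 ↔ a = 0 ∧ b = 0 ∧ c = 0 := by
  simp [traceless, ← Matrix.ext_iff, Fin.forall_fin_two]
  tauto

end Traceless

section PartialDerivatives

variable (a b c : ℝ × ℝ → ℂ) (p : ℝ × ℝ)

lemma mpdx_traceless :
    mpdx (fun r => traceless (a r) (b r) (c r)) p = traceless (pdx a p) (pdx b p) (pdx c p) := by
  ext i j; fin_cases i <;> fin_cases j <;> simp [mpdx, traceless, pdx, deriv.fun_neg]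

lemma mpdt_traceless :
    mpdt (fun r => traceless (a r) (b r) (c r)) p = traceless (pdt a p) (pdt b p) (pdt c p) := by
  ext i j; fin_cases i <;> fin_cases j <;> simp [mpdt, traceless, pdt, deriv.fun_neg]

lemma pdx_conj : pdx (fun r => conj (a r)) p = conj (pdx a p) := by
  simp only [pdx, starRingEnd_apply]; exact deriv.star

end PartialDerivatives

lemma Qm_eq_traceless (q : ℝ × ℝ → ℂ) (p : ℝ × ℝ) :
    Qm q p = traceless 0 (q p) (-conj (q p)) := by
  ext i j; fin_cases i <;> fin_cases j <;> simp [Qm, traceless]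

lemma mpdx_Qm (q : ℝ × ℝ → ℂ) (p : ℝ × ℝ) :
    mpdx (Qm q) p = traceless 0 (pdx q p) (-conj (pdx q p)) := by
  have hconj : pdx (fun r => -conj (q r)) p = -conj (pdx q p) := by
    rw [← pdx_conj]; exact deriv.fun_neg
  rw [funext (Qm_eq_traceless q), mpdx_traceless, hconj]
  simp [pdx]

lemma Qm_sq (q : ℝ × ℝ → ℂ) (p : ℝ × ℝ) :
    Qm q p ^ 2 = (-(q p * conj (q p))) • (1 : M2) := by
  ext i j; fin_cases i <;> fin_cases j <;> simp [Qm, sq, mul_apply]; ring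

lemma Pm_eq_traceless (q : ℝ × ℝ → ℂ) (p : ℝ × ℝ) (k : ℂ) :
    Pm q p k =
      traceless (-I * k ^ 2 + I / 2 * (q p * conj (q p))) (k * q p) (-(k * conj (q p))) := by
  rw [Pm, Um, Qm_sq]
  ext i j; fin_cases i <;> fin_cases j <;> simp [Qm, sigma3, traceless]
  ring

lemma Rm_eq_traceless (q : ℝ × ℝ → ℂ) (p : ℝ × ℝ) (k : ℂ) :
    Rm q p k = traceless
      (-(2 * I) * k ^ 4 + I * k ^ 2 * (q p * conj (q p))
        + 1 / 2 * (q p * conj (pdx q p) - conj (q p) * pdx q p)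
        + I / 4 * (q p * conj (q p)) ^ 2)
      (2 * k ^ 3 * q p + I * k * pdx q p) (-(2 * k ^ 3 * conj (q p)) + I * k * conj (pdx q p)) := by
  have hQ4 : Qm q p ^ 4 = (q p * conj (q p)) ^ 2 • (1 : M2) := by
    rw [show 4 = 2 * 2 from rfl, pow_mul, Qm_sq, smul_pow, one_pow, neg_sq]
  rw [Rm, Vm, hQ4, Qm_sq, mpdx_Qm]
  ext i j; fin_cases i <;> fin_cases j <;> simp [Qm, sigma3, traceless] <;> ring

section Slices

variable {f : ℝ × ℝ → ℂ}

lemma hasDerivAt_pdx {p : ℝ × ℝ} (hf : DifferentiableAt ℝ f p) :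
    HasDerivAt (fun x => f (x, p.2)) (pdx f p) p.1 :=
  (hf.comp p.1 (differentiableAt_id.prodMk (differentiableAt_const p.2))).hasDerivAt

lemma hasDerivAt_pdt {p : ℝ × ℝ} (hf : DifferentiableAt ℝ f p) :
    HasDerivAt (fun t => f (p.1, t)) (pdt f p) p.2 :=
  (hf.comp p.2 ((differentiableAt_const p.1).prodMk differentiableAt_id)).hasDerivAt

lemma hasDerivAt_pdx_pdx (hf : ContDiff ℝ 2 f) (p : ℝ × ℝ) :
    HasDerivAt (fun x => pdx f (x, p.2)) (pdx (pdx f) p) p.1 := by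
  have hslice : ContDiff ℝ (1 + 1) (fun x => f (x, p.2)) :=
    hf.comp (contDiff_id.prodMk contDiff_const)
  exact ((contDiff_succ_iff_deriv.mp hslice).2.2.differentiable one_ne_zero p.1).hasDerivAt

end Slices

lemma mpdt_Pm {q : ℝ × ℝ → ℂ} {p : ℝ × ℝ} (hq : DifferentiableAt ℝ q p) (k : ℂ) :
    mpdt (fun r => Pm q r k) p = traceless
      (I / 2 * (pdt q p * conj (q p) + q p * conj (pdt q p)))
      (k * pdt q p) (-(k * conj (pdt q p))) := by
  have hqt := hasDerivAt_pdt hq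
  simp only [funext (fun r => Pm_eq_traceless q r k), mpdt_traceless, starRingEnd_apply]
  congr 1
  · exact ((hqt.mul hqt.star).const_mul (I / 2) |>.const_add _).deriv
  · exact (hqt.const_mul k).deriv
  · exact (hqt.star.const_mul k).neg.deriv

lemma mpdx_Rm {q : ℝ × ℝ → ℂ} (hq : ContDiff ℝ 2 q) (p : ℝ × ℝ) (k : ℂ) :
    mpdx (fun r => Rm q r k) p = traceless
      (I * k ^ 2 * (pdx q p * conj (q p) + q p * conj (pdx q p))
        + 1 / 2 * (q p * conj (pdx (pdx q) p) - conj (q p) * pdx (pdx q) p)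
        + I / 2 * (q p * conj (q p)) * (pdx q p * conj (q p) + q p * conj (pdx q p)))
      (2 * k ^ 3 * pdx q p + I * k * pdx (pdx q) p)
      (-(2 * k ^ 3 * conj (pdx q p)) + I * k * conj (pdx (pdx q) p)) := by
  have hqx := hasDerivAt_pdx (hq.differentiable two_ne_zero p)
  have hqxx := hasDerivAt_pdx_pdx hq p
  have hnormSq := hqx.mul hqx.star
  simp only [funext (fun r => Rm_eq_traceless q r k), mpdx_traceless, starRingEnd_apply]
  congr 1
  · refine ((((hnormSq.const_mul (I * k ^ 2)).const_add _).add
      (((hqx.mul hqxx.star).sub (hqx.star.mul hqxx)).const_mul (1 / 2))).add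
      ((hnormSq.pow 2).const_mul (I / 4))).deriv.trans ?_
    simp only [Pi.mul_apply]; ring
  · exact ((hqx.const_mul _).add (hqxx.const_mul _)).deriv
  · exact ((hqx.star.const_mul _).neg.add (hqxx.star.const_mul _)).deriv

def giLhs (q : ℝ × ℝ → ℂ) (p : ℝ × ℝ) : ℂ :=
  I * pdt q p + pdx (pdx q) p - I * q p ^ 2 * conj (pdx q p) + 1 / 2 * q p ^ 3 * conj (q p) ^ 2

lemma gi_iff_forall_giLhs_eq_zero (q : ℝ × ℝ → ℂ) : GI q ↔ ∀ p, giLhs q p = 0 := by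
  simp only [GI, giLhs, pdx_conj]

lemma zeroCurvature_eq_traceless_giLhs {q : ℝ × ℝ → ℂ} (hq : ContDiff ℝ 2 q) (p : ℝ × ℝ)
    (k : ℂ) :
    mpdt (fun r => Pm q r k) p - mpdx (fun r => Rm q r k) p
        + Pm q p k * Rm q p k - Rm q p k * Pm q p k
      = traceless ((conj (q p) * giLhs q p - q p * conj (giLhs q p)) / 2)
          (-(I * k * giLhs q p)) (-(I * k * conj (giLhs q p))) := by
  rw [mpdt_Pm (hq.differentiable two_ne_zero p), mpdx_Rm hq, Pm_eq_traceless, Rm_eq_traceless,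
    add_sub_assoc, traceless_mul_sub_mul, traceless_sub, traceless_add]
  simp only [giLhs, map_add, map_sub, map_mul, map_pow, conj_I, conj_conj, map_div₀, map_one,
    map_ofNat]
  congr 1 <;> ring_nf <;> simp only [I_sq] <;> ring

theorem gi_lax_representation (q : ℝ × ℝ → ℂ) (hq : ContDiff ℝ 2 q) :
    (∀ (p : ℝ × ℝ) (k : ℂ),
      mpdt (fun r => Pm q r k) p - mpdx (fun r => Rm q r k) p
        + Pm q p k * Rm q p k - Rm q p k * Pm q p k = 0) ↔ GI q := by
  simp only [zeroCurvature_eq_traceless_giLhs hq, traceless_eq_zero_iff,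
    gi_iff_forall_giLhs_eq_zero]
  refine ⟨fun h p => ?_, fun h p k => ?_⟩
  · simpa using (h p 1).2.1
  · simp [h p]
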